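/- Let G = (V, E, Σ, Π) be a constraint graph in which every vertex lies on at least one edge, and let ψ^ini and ψ^tar be satisfying assignments for G with val_G(ψ^ini ↭ ψ^tar) = 1. Then in the Lund–Yannakakis system there exists a reconfiguration sequence of covers from C_{ψ^ini} to C_{ψ^tar} in which every cover has size at most |V| + 1. -/

import Mathlib

/-- Two assignments differ on at most one vertex. -/
def adjOne {V A : Type*} (ψ φ : V → A) : Prop := ∃ v0, ∀ v, v ≠ v0 → ψ v = φ v

/-- Value of an assignment: the fraction of constraints (indexed by `ι`, with multiplicity)
that it satisfies. -/
noncomputable def valC {V A ι : Type*} [Fintype ι] (sat : ι → (V → A) → Prop)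
    (ψ : V → A) : ℝ :=
  (Nat.card {i : ι // sat i ψ} : ℝ) / (Fintype.card ι : ℝ)

/-- The minimum value along a sequence of assignments. -/
noncomputable def valSeqC {V A ι : Type*} [Fintype ι] (sat : ι → (V → A) → Prop)
    (l : List (V → A)) : ℝ :=
  (l.map (valC sat)).foldr min 1

/-- `maxValC sat ψi ψt` is the maximum, over all reconfiguration sequences from `ψi` to `ψt`
(finite sequences of assignments starting at `ψi`, ending at `ψt`, consecutive assignments
differing on at most one vertex), of the minimum value along the sequence. -/
noncomputable def maxValC {V A ι : Type*} [Fintype ι] (sat : ι → (V → A) → Prop)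
    (ψi ψt : V → A) : ℝ :=
  sSup {r : ℝ | ∃ l : List (V → A), l ≠ [] ∧ l.head? = some ψi ∧ l.getLast? = some ψt ∧
    l.Chain' adjOne ∧ r = valSeqC sat l}

/-- The Lund–Yannakakis set `S_{v,α}` in the universe `E × B` (with `B = {0,1}^Σ` modeled as
`A → Bool`): the union of `{e} × Q̄_α` over edges `e ∈ E` with first endpoint `v`, together
with `{e} × Q_{π_e⁻¹(α)}` over edges `e ∈ E` with second endpoint `v`. -/
def LYSet {V A : Type*} (E : Finset (V × V)) (π : V × V → Set (A × A)) (v : V) (α : A) :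
    Set ((V × V) × (A → Bool)) :=
  {p | p.1 ∈ E ∧ ((p.1.1 = v ∧ p.2 α = false) ∨
    (p.1.2 = v ∧ ∃ γ, (γ, α) ∈ π p.1 ∧ p.2 γ = true))}

/-- `C ⊆ V × Σ` is a cover of the Lund–Yannakakis system: the sets `S_{v,α}` for
`(v, α) ∈ C` cover the universe `E × B`. -/
def IsLYCover {V A : Type*} (E : Finset (V × V)) (π : V × V → Set (A × A))
    (C : Finset (V × A)) : Prop :=
  ∀ p : (V × V) × (A → Bool), p.1 ∈ E → ∃ va ∈ C, p ∈ LYSet E π va.1 va.2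

/-! The value of a sequence of assignments is `1` or the value of one of its members, and
there are finitely many assignments, so the supremum `val_G(ψi ↭ ψt) = 1` is attained by a
sequence of satisfying assignments. Along it, each step `ψ → φ` changing one vertex becomes the
two cover steps `C_ψ → C_ψ ∪ C_φ → C_φ`: `C_ψ` is a cover when `ψ` satisfies `G`, supersets of
covers are covers, and `|C_ψ ∪ C_φ| ≤ |V| + 1`. -/

open Relation

section ReconfSeq

variable {α : Type*} {r : α → α → Prop} {p : α → Prop} {a b : α}

def IsReconfSeq (r : α → α → Prop) (a b : α) (l : List α) : Prop :=
  l ≠ [] ∧ l.head? = some a ∧ l.getLast? = some b ∧ l.IsChain r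

theorem IsReconfSeq.reflTransGen {l : List α} (hl : IsReconfSeq r a b l) (hp : ∀ x ∈ l, p x) :
    ReflTransGen (fun x y => r x y ∧ p x ∧ p y) a b := by
  obtain ⟨hne, hhead, hlast, hchain⟩ := hl
  obtain ⟨x, xs, rfl⟩ := List.exists_cons_of_ne_nil hne
  obtain rfl : x = a := by simpa using hhead
  refine List.relationReflTransGen_of_exists_isChain_cons xs
    (hchain.imp_of_mem_imp fun x y hx hy hxy => ⟨hxy, hp x hx, hp y hy⟩) ?_
  simpa [List.getLast?_eq_some_getLast] using hlast

theorem IsReconfSeq.left_mem {l : List α} (hl : IsReconfSeq r a b l) : a ∈ l :=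
  List.mem_of_mem_head? hl.2.1

theorem exists_isReconfSeq_of_reflTransGen (h : ReflTransGen r a b) :
    ∃ l, IsReconfSeq r a b l := by
  obtain ⟨l, hchain, hlast⟩ := List.exists_isChain_cons_of_relationReflTransGen h
  exact ⟨a :: l, List.cons_ne_nil _ _, rfl, by simp [List.getLast?_eq_some_getLast, hlast], hchain⟩

theorem exists_isReconfSeq_forall_of_reflTransGen (ha : p a)
    (h : ReflTransGen (fun x y => r x y ∧ p x ∧ p y) a b) :
    ∃ l, IsReconfSeq r a b l ∧ ∀ x ∈ l, p x := by
  obtain ⟨l, hne, hhead, hlast, hchain⟩ := exists_isReconfSeq_of_reflTransGen h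
  refine ⟨l, ⟨hne, hhead, hlast, hchain.imp fun _ _ hxy => hxy.1⟩, ?_⟩
  refine hchain.induction p l (fun _ _ hxy _ => hxy.2.2) fun hne' => ?_
  rwa [Option.some_inj.mp ((List.head?_eq_some_head hne').symm.trans hhead)]

end ReconfSeq

section Assignments

variable {V A : Type*}

theorem adjOne_update [DecidableEq V] (ψ : V → A) (v : V) (x : A) :
    adjOne ψ (Function.update ψ v x) :=
  ⟨v, fun _ hw => (Function.update_of_ne hw _ _).symm⟩

theorem adjOne.symm {ψ φ : V → A} (h : adjOne ψ φ) : adjOne φ ψ :=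
  let ⟨v, hv⟩ := h; ⟨v, fun w hw => (hv w hw).symm⟩

theorem reflTransGen_adjOne [Finite V] (ψ φ : V → A) : ReflTransGen adjOne ψ φ := by
  classical
  have : Fintype V := Fintype.ofFinite V
  suffices ∀ s : Finset V, ∀ ψ : V → A, (∀ v ∉ s, ψ v = φ v) → ReflTransGen adjOne ψ φ from
    this Finset.univ ψ (by simp)
  intro s
  induction s using Finset.induction_on with
  | empty => exact fun ψ hψ => (funext fun v => hψ v (Finset.notMem_empty v)) ▸ .refl
  | insert v s _ ih =>
    refine fun ψ hψ => .head (adjOne_update ψ v (φ v)) (ih _ fun w hw => ?_)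
    by_cases hwv : w = v
    · simp [hwv]
    · simpa [hwv] using hψ w (by simp [hwv, hw])

end Assignments

section Value

variable {α : Type*} [LinearOrder α]

theorem List.foldr_min_le_of_mem {l : List α} (a : α) {x : α} (hx : x ∈ l) :
    l.foldr min a ≤ x := by
  induction l with
  | nil => simp at hx
  | cons y ys ih =>
    rcases List.mem_cons.mp hx with rfl | h
    · exact min_le_left _ _
    · exact (min_le_right _ _).trans (ih h)

theorem List.foldr_min_eq_or_mem (l : List α) (a : α) : l.foldr min a = a ∨ l.foldr min a ∈ l := by
  induction l with
  | nil => exact .inl rfl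
  | cons y ys ih =>
    rcases min_choice y (ys.foldr min a) with h | h <;> simp only [List.foldr_cons, h]
    · exact .inr List.mem_cons_self
    · exact ih.imp_right (List.mem_cons_of_mem y)

variable {V A ι : Type*} [Fintype ι] {sat : ι → (V → A) → Prop}

theorem valSeqC_mem_insert_range (l : List (V → A)) :
    valSeqC sat l ∈ insert 1 (Set.range (valC sat)) := by
  rcases List.foldr_min_eq_or_mem (l.map (valC sat)) 1 with h | h
  · exact .inl h
  · obtain ⟨ψ, -, hψ⟩ := List.mem_map.mp h
    exact .inr ⟨ψ, hψ.trans rfl⟩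

theorem one_le_valC_of_valSeqC_eq_one {l : List (V → A)} (hl : valSeqC sat l = 1)
    {ψ : V → A} (hψ : ψ ∈ l) : 1 ≤ valC sat ψ :=
  hl ▸ List.foldr_min_le_of_mem 1 (List.mem_map_of_mem hψ)

theorem sat_of_one_le_valC {ψ : V → A} (h : 1 ≤ valC sat ψ) (i : ι) : sat i ψ := by
  classical
  by_contra hi
  have hlt := Fintype.card_subtype_lt (p := fun i => sat i ψ) hi
  have hpos : (0 : ℝ) < Fintype.card ι := by exact_mod_cast (Nat.zero_le _).trans_lt hlt
  rw [valC, Nat.card_eq_fintype_card, one_le_div hpos] at h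
  exact absurd h (by exact_mod_cast hlt.not_ge)

theorem exists_isReconfSeq_valSeqC_eq_maxValC [Finite V] [Finite A] (ψi ψt : V → A) :
    ∃ l, IsReconfSeq adjOne ψi ψt l ∧ valSeqC sat l = maxValC sat ψi ψt := by
  set T := {r : ℝ | ∃ l : List (V → A), l ≠ [] ∧ l.head? = some ψi ∧ l.getLast? = some ψt ∧
    l.IsChain adjOne ∧ r = valSeqC sat l}
  have hne : T.Nonempty := by
    obtain ⟨l, h0, h1, h2, h3⟩ := exists_isReconfSeq_of_reflTransGen (reflTransGen_adjOne ψi ψt)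
    exact ⟨_, l, h0, h1, h2, h3, rfl⟩
  have hfin : T.Finite := ((Set.finite_range (valC sat)).insert 1).subset <| by
    rintro _ ⟨l, -, -, -, -, rfl⟩
    exact valSeqC_mem_insert_range l
  obtain ⟨l, h0, h1, h2, h3, hl⟩ := hne.csSup_mem hfin
  exact ⟨l, ⟨h0, h1, h2, h3⟩, hl.symm⟩

theorem exists_isReconfSeq_forall_sat_of_maxValC_eq_one [Finite V] [Finite A] {ψi ψt : V → A}
    (h : maxValC sat ψi ψt = 1) :
    ∃ l, IsReconfSeq adjOne ψi ψt l ∧ ∀ ψ ∈ l, ∀ i, sat i ψ := by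
  obtain ⟨l, hl, hval⟩ := exists_isReconfSeq_valSeqC_eq_maxValC (sat := sat) ψi ψt
  exact ⟨l, hl, fun ψ hψ => sat_of_one_le_valC (one_le_valC_of_valSeqC_eq_one (hval.trans h) hψ)⟩

end Value

section Covers

variable {V A : Type*} {E : Finset (V × V)} {π : V × V → Set (A × A)}

theorem IsLYCover.mono {C C' : Finset (V × A)} (hC : IsLYCover E π C) (h : C ⊆ C') :
    IsLYCover E π C' := fun p hp =>
  let ⟨va, hva, hmem⟩ := hC p hp; ⟨va, h hva, hmem⟩

variable [Fintype V] [DecidableEq V] [DecidableEq A]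

def graphFinset (ψ : V → A) : Finset (V × A) := Finset.univ.image fun v => (v, ψ v)

theorem card_graphFinset_le (ψ : V → A) : (graphFinset ψ).card ≤ Fintype.card V :=
  Finset.card_image_le

/-- For an edge `e = (v, w)`, an element `(e, q)` lies in `S_{v, ψ v}` unless `q (ψ v) = 1`, and
then it lies in `S_{w, ψ w}` because `ψ v ∈ π_e⁻¹(ψ w)`. -/
theorem isLYCover_graphFinset {ψ : V → A} (hψ : ∀ e ∈ E, (ψ e.1, ψ e.2) ∈ π e) :
    IsLYCover E π (graphFinset ψ) := by
  rintro ⟨⟨v, w⟩, q⟩ he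
  cases hq : q (ψ v)
  · exact ⟨(v, ψ v), Finset.mem_image_of_mem _ (Finset.mem_univ v), he, .inl ⟨rfl, hq⟩⟩
  · exact ⟨(w, ψ w), Finset.mem_image_of_mem _ (Finset.mem_univ w), he,
      .inr ⟨rfl, ψ v, hψ _ he, hq⟩⟩

theorem card_graphFinset_sdiff_le_one {ψ φ : V → A} (h : adjOne ψ φ) :
    (graphFinset φ \ graphFinset ψ).card ≤ 1 := by
  obtain ⟨v, hv⟩ := h
  refine Finset.card_le_one.mpr fun x hx y hy => ?_
  suffices ∀ x ∈ graphFinset φ \ graphFinset ψ, x = (v, φ v) from (this x hx).trans (this y hy).symm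
  intro x hx
  obtain ⟨⟨w, -, rfl⟩, hw⟩ := (Finset.mem_sdiff.mp hx).imp_left Finset.mem_image.mp
  by_cases hwv : w = v
  · rw [hwv]
  · exact absurd (Finset.mem_image.mpr ⟨w, Finset.mem_univ w, by rw [hv w hwv]⟩) hw

theorem card_graphFinset_union_le {ψ φ : V → A} (h : adjOne ψ φ) :
    (graphFinset ψ ∪ graphFinset φ).card ≤ Fintype.card V + 1 := by
  rw [Finset.union_comm, ← Finset.card_sdiff_add_card]
  linarith [card_graphFinset_sdiff_le_one h, card_graphFinset_le ψ]

theorem reflTransGen_graphFinset_of_adjOne {ψ φ : V → A}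
    (hψ : ∀ e ∈ E, (ψ e.1, ψ e.2) ∈ π e) (hφ : ∀ e ∈ E, (φ e.1, φ e.2) ∈ π e)
    (h : adjOne ψ φ) :
    ReflTransGen (fun P Q => ((P \ Q) ∪ (Q \ P)).card ≤ 1 ∧
        (IsLYCover E π P ∧ P.card ≤ Fintype.card V + 1) ∧
        (IsLYCover E π Q ∧ Q.card ≤ Fintype.card V + 1))
      (graphFinset ψ) (graphFinset φ) := by
  have hcovψ := isLYCover_graphFinset hψ
  have hcovφ := isLYCover_graphFinset hφ
  have hcardψ := (card_graphFinset_le ψ).trans (Nat.le_succ _)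
  have hcardφ := (card_graphFinset_le φ).trans (Nat.le_succ _)
  have hcovU := hcovψ.mono (Finset.subset_union_left (s₂ := graphFinset φ))
  have hcardU := card_graphFinset_union_le h
  refine .head ⟨?_, ⟨hcovψ, hcardψ⟩, hcovU, hcardU⟩
    (.single ⟨?_, ⟨hcovU, hcardU⟩, hcovφ, hcardφ⟩)
  · simpa [Finset.union_sdiff_left,
      Finset.sdiff_eq_empty_iff_subset.mpr Finset.subset_union_left]
      using card_graphFinset_sdiff_le_one h
  · simpa [Finset.union_sdiff_right,
      Finset.sdiff_eq_empty_iff_subset.mpr Finset.subset_union_right]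
      using card_graphFinset_sdiff_le_one h.symm

end Covers

theorem setcover_reconf_completeness_general {V A : Type*} [Fintype V] [DecidableEq V]
    [Fintype A] [DecidableEq A]
    (E : Finset (V × V)) (π : V × V → Set (A × A))
    (ψi ψt : V → A)
    (hval : maxValC (fun e : {x // x ∈ E} => fun ψ : V → A =>
      (ψ e.1.1, ψ e.1.2) ∈ π e.1) ψi ψt = 1) :
    ∃ l : List (Finset (V × A)), l ≠ [] ∧
      l.head? = some (Finset.univ.image fun v => (v, ψi v)) ∧
      l.getLast? = some (Finset.univ.image fun v => (v, ψt v)) ∧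
      l.Chain' (fun P Q => ((P \ Q) ∪ (Q \ P)).card ≤ 1) ∧
      ∀ C ∈ l, IsLYCover E π C ∧ C.card ≤ Fintype.card V + 1 := by
  obtain ⟨L, hL, hsat⟩ := exists_isReconfSeq_forall_sat_of_maxValC_eq_one hval
  have hsatE : ∀ ψ ∈ L, ∀ e ∈ E, (ψ e.1, ψ e.2) ∈ π e := fun ψ hψ e he => hsat ψ hψ ⟨e, he⟩
  have hcovers := (hL.reflTransGen hsatE).lift' graphFinset
    fun _ _ ⟨hstep, hψ, hφ⟩ => reflTransGen_graphFinset_of_adjOne hψ hφ hstep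
  have hini := hsatE ψi hL.left_mem
  obtain ⟨l, ⟨hne, hhead, hlast, hchain⟩, hgood⟩ := exists_isReconfSeq_forall_of_reflTransGen
    ⟨isLYCover_graphFinset hini, (card_graphFinset_le ψi).trans (Nat.le_succ _)⟩ hcovers
  exact ⟨l, hne, hhead, hlast, hchain, hgood⟩

/-- if every vertex lies on at least one edge and `ψi, ψt` are satisfying
assignments with `val_G(ψi ↭ ψt) = 1`, then there is a reconfiguration sequence of covers of
the Lund–Yannakakis system from `C_{ψi}` to `C_{ψt}` (consecutive covers differing by adding
or removing a single element) in which every cover has size at most `|V| + 1`. -/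
theorem setcover_reconf_completeness {V A : Type*} [Fintype V] [DecidableEq V]
    [Fintype A] [DecidableEq A]
    (E : Finset (V × V)) (π : V × V → Set (A × A))
    (hdeg : ∀ v : V, ∃ e ∈ E, e.1 = v ∨ e.2 = v)
    (ψi ψt : V → A)
    (hψi : ∀ e ∈ E, (ψi e.1, ψi e.2) ∈ π e) (hψt : ∀ e ∈ E, (ψt e.1, ψt e.2) ∈ π e)
    (hval : maxValC (fun e : {x // x ∈ E} => fun ψ : V → A =>
      (ψ e.1.1, ψ e.1.2) ∈ π e.1) ψi ψt = 1) :
    ∃ l : List (Finset (V × A)), l ≠ [] ∧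
      l.head? = some (Finset.univ.image fun v => (v, ψi v)) ∧
      l.getLast? = some (Finset.univ.image fun v => (v, ψt v)) ∧
      l.Chain' (fun P Q => ((P \ Q) ∪ (Q \ P)).card ≤ 1) ∧
      ∀ C ∈ l, IsLYCover E π C ∧ C.card ≤ Fintype.card V + 1 :=
  setcover_reconf_completeness_general E π ψi ψt hval
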